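/- arXiv:1311.5668 — 2 statements merged into one kernel-verified Lean document; each statement's English description precedes it below -/
import Mathlib

section
/- For diffeological spaces X, Y, Z, the natural map α : C∞(X × Y, Z) → C∞(X, C∞(Y, Z)) given by α(f)(x)(y) = f(x,y) is a diffeomorphism, where mapping spaces carry the functional diffeology. -/
open Set

/-- A diffeology on a type `X`: a family of distinguished parameterizations ("plots")
defined on open subsets of Euclidean spaces, containing all constant parameterizations,
local, and closed under precomposition with smooth maps. -/
structure Diffeology' (X : Type) : Type 1 where
  IsPlot : {n : ℕ} → Set (Fin n → ℝ) → ((Fin n → ℝ) → X) → Prop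
  isPlot_const : ∀ {n : ℕ} (U : Set (Fin n → ℝ)) (x : X), IsOpen U →
    IsPlot U fun _ => x
  isPlot_locality : ∀ {n : ℕ} (U : Set (Fin n → ℝ)) (P : (Fin n → ℝ) → X), IsOpen U →
    (∀ u ∈ U, ∃ W, IsOpen W ∧ u ∈ W ∧ W ⊆ U ∧ IsPlot W P) → IsPlot U P
  isPlot_comp : ∀ {n m : ℕ} (U : Set (Fin n → ℝ)) (P : (Fin n → ℝ) → X)
    (V : Set (Fin m → ℝ)) (Q : (Fin m → ℝ) → (Fin n → ℝ)),
    IsPlot U P → IsOpen U → IsOpen V → ContDiffOn ℝ (⊤ : ℕ∞) Q V → MapsTo Q V U →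
    IsPlot V (P ∘ Q)

variable {X Y Z : Type}

/-- A map between diffeological spaces is smooth if it takes plots to plots. -/
def DSmooth (dX : Diffeology' X) (dY : Diffeology' Y) (f : X → Y) : Prop :=
  ∀ {n : ℕ} (U : Set (Fin n → ℝ)) (P : (Fin n → ℝ) → X),
    IsOpen U → dX.IsPlot U P → dY.IsPlot U (f ∘ P)

theorem DSmooth.comp {dX : Diffeology' X} {dY : Diffeology' Y} {dZ : Diffeology' Z}
    {g : Y → Z} {f : X → Y} (hg : DSmooth dY dZ g) (hf : DSmooth dX dY f) :
    DSmooth dX dZ (g ∘ f) :=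
  fun U P hU hP => hg U (f ∘ P) hU (hf U P hU hP)

theorem DSmooth.const {dX : Diffeology' X} {dY : Diffeology' Y} (y : Y) :
    DSmooth dX dY fun _ => y :=
  fun U _ hU _ => dY.isPlot_const U y hU

/-- An induction: an injective smooth map such that `X` carries the pullback diffeology,
i.e. a parameterization is a plot of `X` iff its composition with `f` is a plot of `Y`. -/
def IsInduction (dX : Diffeology' X) (dY : Diffeology' Y) (f : X → Y) : Prop :=
  Function.Injective f ∧
    ∀ {n : ℕ} (U : Set (Fin n → ℝ)) (P : (Fin n → ℝ) → X), IsOpen U →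
      (dX.IsPlot U P ↔ dY.IsPlot U (f ∘ P))

/-- `Q` lifts locally along `f` through plots of `X`. -/
def LiftsLocally (dX : Diffeology' X) (f : X → Y) {n : ℕ}
    (U : Set (Fin n → ℝ)) (Q : (Fin n → ℝ) → Y) : Prop :=
  ∀ u ∈ U, ∃ W, IsOpen W ∧ u ∈ W ∧ W ⊆ U ∧
    ∃ P : (Fin n → ℝ) → X, dX.IsPlot W P ∧ ∀ w ∈ W, f (P w) = Q w

/-- A subduction: a surjective smooth map such that `Y` carries the pushforward diffeology,
i.e. every plot of `Y` locally lifts along `f` through plots of `X`. -/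
def IsSubduction (dX : Diffeology' X) (dY : Diffeology' Y) (f : X → Y) : Prop :=
  Function.Surjective f ∧ DSmooth dX dY f ∧
    ∀ {n : ℕ} (U : Set (Fin n → ℝ)) (Q : (Fin n → ℝ) → Y), IsOpen U →
      dY.IsPlot U Q → LiftsLocally dX f U Q

/-- A diffeomorphism: a smooth map with a smooth two-sided inverse. -/
def IsDiffeomorphism (dX : Diffeology' X) (dY : Diffeology' Y) (f : X → Y) : Prop :=
  DSmooth dX dY f ∧ ∃ g : Y → X,
    DSmooth dY dX g ∧ Function.LeftInverse g f ∧ Function.RightInverse g f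

/-- The standard diffeology on a normed space: plots are the smooth parameterizations. -/
noncomputable def stdDiffeology (E : Type) [NormedAddCommGroup E] [NormedSpace ℝ E] :
    Diffeology' E where
  IsPlot {n} U P := IsOpen U → ContDiffOn ℝ (⊤ : ℕ∞) P U
  isPlot_const _ _ _ _ := contDiffOn_const
  isPlot_locality U P hU h _ := by
    intro u hu
    obtain ⟨W, hWo, huW, _, hPW⟩ := h u hu
    exact ((hPW hWo u huW).contDiffAt (hWo.mem_nhds huW)).contDiffWithinAt
  isPlot_comp U P V Q hP hU hV hQ hmap _ := (hP hU).comp hQ hmap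

/-- `dP` is the product diffeology of `dA` and `dB`: a parameterization into `A × B`
is a plot iff both components are plots. -/
def IsProductDiffeology {A B : Type} (dA : Diffeology' A) (dB : Diffeology' B)
    (dP : Diffeology' (A × B)) : Prop :=
  ∀ {n : ℕ} (U : Set (Fin n → ℝ)) (P : (Fin n → ℝ) → A × B), IsOpen U →
    (dP.IsPlot U P ↔ dA.IsPlot U (Prod.fst ∘ P) ∧ dB.IsPlot U (Prod.snd ∘ P))

/-- `dF` is the functional diffeology on `C^∞(X,Y)`: `P : U → C^∞(X,Y)` is a plot iff
for every plot `Q : V → X`, the joint evaluation `(u,v) ↦ P u (Q v)` is a plot of `Y`. -/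
def IsFunctionalDiffeology {X Y : Type} (dX : Diffeology' X) (dY : Diffeology' Y)
    (dF : Diffeology' {f : X → Y // DSmooth dX dY f}) : Prop :=
  ∀ {n : ℕ} (U : Set (Fin n → ℝ)) (P : (Fin n → ℝ) → {f : X → Y // DSmooth dX dY f}),
    IsOpen U →
    (dF.IsPlot U P ↔
      ∀ {m : ℕ} (V : Set (Fin m → ℝ)) (Q : (Fin m → ℝ) → X), IsOpen V → dX.IsPlot V Q →
        dY.IsPlot
          {w : Fin (n + m) → ℝ |
            (fun i => w (Fin.castAdd m i)) ∈ U ∧ (fun j => w (Fin.natAdd n j)) ∈ V}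
          (fun w => (P fun i => w (Fin.castAdd m i)).1 (Q fun j => w (Fin.natAdd n j))))


section ExpLawHelpers

lemma reindex_contDiffOn {k l : ℕ} (σ : Fin k → Fin l) (V : Set (Fin l → ℝ)) :
    ContDiffOn ℝ (⊤ : ℕ∞) (fun w : Fin l → ℝ => w ∘ σ) V := by
  apply ContDiff.contDiffOn
  exact contDiff_pi.mpr fun i =>
    (ContinuousLinearMap.proj (σ i) : (Fin l → ℝ) →L[ℝ] ℝ).contDiff

lemma Diffeology'.isPlot_reindex {A : Type} (dA : Diffeology' A) {k l : ℕ}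
    {U : Set (Fin k → ℝ)} {P : (Fin k → ℝ) → A} (hU : IsOpen U) (hP : dA.IsPlot U P)
    (σ : Fin k → Fin l) {V : Set (Fin l → ℝ)} (hV : IsOpen V)
    (hmap : ∀ w ∈ V, (w ∘ σ) ∈ U) :
    dA.IsPlot V (fun w => P (w ∘ σ)) :=
  dA.isPlot_comp U P V (fun w => w ∘ σ) hP hU hV (reindex_contDiffOn σ V) hmap

lemma isOpen_pairSet {n m : ℕ} {U : Set (Fin n → ℝ)} {V : Set (Fin m → ℝ)}
    (hU : IsOpen U) (hV : IsOpen V) :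
    IsOpen {w : Fin (n + m) → ℝ |
      (fun i => w (Fin.castAdd m i)) ∈ U ∧ (fun j => w (Fin.natAdd n j)) ∈ V} := by
  have h1 : Continuous fun w : Fin (n + m) → ℝ => (fun i => w (Fin.castAdd m i)) :=
    continuous_pi fun i => continuous_apply _
  have h2 : Continuous fun w : Fin (n + m) → ℝ => (fun j => w (Fin.natAdd n j)) :=
    continuous_pi fun j => continuous_apply _
  exact (hU.preimage h1).inter (hV.preimage h2)

end ExpLawHelpers

/-- exponential law: the natural map
`α : C^∞(X × Y, Z) → C^∞(X, C^∞(Y, Z))`, `α f x y = f (x, y)`, is a diffeomorphism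
with respect to the functional diffeologies. -/
theorem exponential_law_diffeomorphism
    {X Y Z : Type} (dX : Diffeology' X) (dY : Diffeology' Y) (dZ : Diffeology' Z)
    (dXY : Diffeology' (X × Y)) (hXY : IsProductDiffeology dX dY dXY)
    (dYZ : Diffeology' {f : Y → Z // DSmooth dY dZ f})
    (hYZ : IsFunctionalDiffeology dY dZ dYZ)
    (dXYZ : Diffeology' {f : X × Y → Z // DSmooth dXY dZ f})
    (hXYZ : IsFunctionalDiffeology dXY dZ dXYZ)
    (dCur : Diffeology' {g : X → {f : Y → Z // DSmooth dY dZ f} // DSmooth dX dYZ g})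
    (hCur : IsFunctionalDiffeology dX dYZ dCur) :
    ∃ α : {f : X × Y → Z // DSmooth dXY dZ f} →
        {g : X → {f : Y → Z // DSmooth dY dZ f} // DSmooth dX dYZ g},
      (∀ (f : {f : X × Y → Z // DSmooth dXY dZ f}) (x : X) (y : Y),
        ((α f).1 x).1 y = f.1 (x, y)) ∧
      IsDiffeomorphism dXYZ dCur α := by
  -- currying a smooth function, for a fixed first argument
  have curryy : ∀ (f : {f : X × Y → Z // DSmooth dXY dZ f}) (x : X),
      DSmooth dY dZ fun y => f.1 (x, y) := by
    intro f x m V Q hV hQ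
    exact f.2 V (fun v => (x, Q v)) hV
      ((hXY V _ hV).mpr ⟨dX.isPlot_const V x hV, hQ⟩)
  -- the curried map is smooth into C∞(Y,Z)
  have currySm : ∀ f : {f : X × Y → Z // DSmooth dXY dZ f}, DSmooth dX dYZ fun x =>
      (⟨fun y => f.1 (x, y), curryy f x⟩ : {g : Y → Z // DSmooth dY dZ g}) := by
    intro f n U P hU hP
    refine (hYZ U _ hU).mpr ?_
    intro m V Q hV hQ
    have hW := isOpen_pairSet hU hV
    exact f.2 _ _ hW ((hXY _ _ hW).mpr
      ⟨dX.isPlot_reindex hU hP (Fin.castAdd m) hW fun w hw => hw.1,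
       dY.isPlot_reindex hV hQ (Fin.natAdd n) hW fun w hw => hw.2⟩)
  -- uncurrying
  have uncurrySm : ∀ (g : {g : X → {f : Y → Z // DSmooth dY dZ f} // DSmooth dX dYZ g}),
      DSmooth dXY dZ fun p => (g.1 p.1).1 p.2 := by
    intro g m V S hV hS
    obtain ⟨h1, h2⟩ := (hXY V S hV).mp hS
    have h3 : dYZ.IsPlot V (g.1 ∘ (Prod.fst ∘ S)) := g.2 V _ hV h1
    have h4 := (hYZ V _ hV).mp h3 V (Prod.snd ∘ S) hV h2
    have hmem : ∀ v ∈ V, (v ∘ (Fin.addCases (fun i => i) (fun j => j) : Fin (m + m) → Fin m))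
        ∈ {w : Fin (m + m) → ℝ |
          (fun i => w (Fin.castAdd m i)) ∈ V ∧ (fun j => w (Fin.natAdd m j)) ∈ V} := by
      intro v hv
      constructor
      · have e : (fun i => (v ∘ Fin.addCases (fun i => i) (fun j => j)) (Fin.castAdd m i)) = v := by
          funext i; simp only [Function.comp_apply, Fin.addCases_left]
        rwa [e]
      · have e : (fun j => (v ∘ Fin.addCases (fun i => i) (fun j => j)) (Fin.natAdd m j)) = v := by
          funext j; simp only [Function.comp_apply, Fin.addCases_right]
        rwa [e]
    have h5 := dZ.isPlot_reindex (isOpen_pairSet hV hV) h4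
      (Fin.addCases (fun i => i) (fun j => j)) hV hmem
    have heq : ((fun p : X × Y => (g.1 p.1).1 p.2) ∘ S) = fun v : Fin m → ℝ =>
        ((g.1 ∘ (Prod.fst ∘ S))
          (fun i => (v ∘ Fin.addCases (fun i => i) (fun j => j)) (Fin.castAdd m i))).1
        ((Prod.snd ∘ S)
          (fun j => (v ∘ Fin.addCases (fun i => i) (fun j => j)) (Fin.natAdd m j))) := by
      funext v; simp only [Function.comp_apply, Fin.addCases_left, Fin.addCases_right]
    rw [heq]
    exact h5
  -- the exhibited map and its pointwise formula
  refine ⟨fun f => ⟨fun x => ⟨fun y => f.1 (x, y), curryy f x⟩, currySm f⟩,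
    fun f x y => rfl, ?_, fun g => ⟨fun p => (g.1 p.1).1 p.2, uncurrySm g⟩, ?_, ?_, ?_⟩
  · -- α is smooth
    intro n U P hU hP
    refine (hCur U _ hU).mpr ?_
    intro m V Q hV hQ
    have hW1 := isOpen_pairSet hU hV
    refine (hYZ _ _ hW1).mpr ?_
    intro k V' R hV' hR
    have hW2 := isOpen_pairSet hW1 hV'
    have hVS := isOpen_pairSet hV hV'
    have hS : dXY.IsPlot _ fun v : Fin (m + k) → ℝ =>
        ((Q fun a => v (Fin.castAdd k a)), R fun b => v (Fin.natAdd m b)) :=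
      (hXY _ _ hVS).mpr
        ⟨dX.isPlot_reindex hV hQ (Fin.castAdd k) hVS fun v hv => hv.1,
         dY.isPlot_reindex hV' hR (Fin.natAdd m) hVS fun v hv => hv.2⟩
    have h6 := (hXYZ U P hU).mp hP _ _ hVS hS
    set σ : Fin (n + (m + k)) → Fin (n + m + k) :=
      Fin.addCases (fun i => Fin.castAdd k (Fin.castAdd m i))
        (Fin.addCases (fun a => Fin.castAdd k (Fin.natAdd n a))
          (fun b => Fin.natAdd (n + m) b)) with hσ
    have hmem : ∀ w ∈ {w : Fin (n + m + k) → ℝ |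
        (fun i => w (Fin.castAdd k i)) ∈ {w' : Fin (n + m) → ℝ |
          (fun i => w' (Fin.castAdd m i)) ∈ U ∧ (fun j => w' (Fin.natAdd n j)) ∈ V} ∧
        (fun j => w (Fin.natAdd (n + m) j)) ∈ V'},
        (w ∘ σ) ∈ {w' : Fin (n + (m + k)) → ℝ |
          (fun i => w' (Fin.castAdd (m + k) i)) ∈ U ∧
          (fun j => w' (Fin.natAdd n j)) ∈ {v : Fin (m + k) → ℝ |
            (fun a => v (Fin.castAdd k a)) ∈ V ∧ (fun b => v (Fin.natAdd m b)) ∈ V'}} := by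
      intro w hw
      obtain ⟨⟨hwU, hwV⟩, hwV'⟩ := hw
      refine ⟨?_, ?_, ?_⟩
      · have e : (fun i => (w ∘ σ) (Fin.castAdd (m + k) i)) =
            fun i => w (Fin.castAdd k (Fin.castAdd m i)) := by
          funext i; simp only [hσ, Function.comp_apply, Fin.addCases_left, Fin.addCases_right]
        rwa [e]
      · have e : (fun a => (w ∘ σ) (Fin.natAdd n (Fin.castAdd k a))) =
            fun a => w (Fin.castAdd k (Fin.natAdd n a)) := by
          funext a; simp only [hσ, Function.comp_apply, Fin.addCases_left, Fin.addCases_right]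
        rwa [e]
      · have e : (fun b => (w ∘ σ) (Fin.natAdd n (Fin.natAdd m b))) =
            fun b => w (Fin.natAdd (n + m) b) := by
          funext b; simp only [hσ, Function.comp_apply, Fin.addCases_left, Fin.addCases_right]
        rwa [e]
    have h7 := dZ.isPlot_reindex (isOpen_pairSet hU hVS) h6 σ hW2 hmem
    have heq : (fun w : Fin (n + m + k) → ℝ =>
        (P fun i => (w ∘ σ) (Fin.castAdd (m + k) i)).1
          ((Q fun a => (fun j => (w ∘ σ) (Fin.natAdd n j)) (Fin.castAdd k a)),
           R fun b => (fun j => (w ∘ σ) (Fin.natAdd n j)) (Fin.natAdd m b))) =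
        fun w : Fin (n + m + k) → ℝ =>
          (P fun i => w (Fin.castAdd k (Fin.castAdd m i))).1
            ((Q fun a => w (Fin.castAdd k (Fin.natAdd n a))),
             R fun b => w (Fin.natAdd (n + m) b)) := by
      funext w; simp only [hσ, Function.comp_apply, Fin.addCases_left, Fin.addCases_right]
    rw [heq] at h7
    exact h7
  · -- β is smooth
    intro n U P hU hP
    refine (hXYZ U _ hU).mpr ?_
    intro m V S hV hS
    obtain ⟨h1, h2⟩ := (hXY V S hV).mp hS
    have hW1 := isOpen_pairSet hU hV
    have h3 := (hCur U P hU).mp hP V (Prod.fst ∘ S) hV h1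
    have h4 := (hYZ _ _ hW1).mp h3 V (Prod.snd ∘ S) hV h2
    set σ : Fin (n + m + m) → Fin (n + m) :=
      Fin.addCases (fun i => i) (fun b => Fin.natAdd n b) with hσ
    have hmem : ∀ w ∈ {w : Fin (n + m) → ℝ |
        (fun i => w (Fin.castAdd m i)) ∈ U ∧ (fun j => w (Fin.natAdd n j)) ∈ V},
        (w ∘ σ) ∈ {w' : Fin (n + m + m) → ℝ |
          (fun i => w' (Fin.castAdd m i)) ∈ {v : Fin (n + m) → ℝ |
            (fun i => v (Fin.castAdd m i)) ∈ U ∧ (fun j => v (Fin.natAdd n j)) ∈ V} ∧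
          (fun j => w' (Fin.natAdd (n + m) j)) ∈ V} := by
      intro w hw
      refine ⟨⟨?_, ?_⟩, ?_⟩
      · have e : (fun i => (w ∘ σ) (Fin.castAdd m (Fin.castAdd m i))) =
            fun i => w (Fin.castAdd m i) := by
          funext i; simp only [hσ, Function.comp_apply, Fin.addCases_left, Fin.addCases_right]
        rw [e]; exact hw.1
      · have e : (fun j => (w ∘ σ) (Fin.castAdd m (Fin.natAdd n j))) =
            fun j => w (Fin.natAdd n j) := by
          funext j; simp only [hσ, Function.comp_apply, Fin.addCases_left, Fin.addCases_right]
        rw [e]; exact hw.2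
      · have e : (fun j => (w ∘ σ) (Fin.natAdd (n + m) j)) =
            fun j => w (Fin.natAdd n j) := by
          funext j; simp only [hσ, Function.comp_apply, Fin.addCases_left, Fin.addCases_right]
        rw [e]; exact hw.2
    have h5 := dZ.isPlot_reindex (isOpen_pairSet hW1 hV) h4 σ hW1 hmem
    have heq : (fun w : Fin (n + m) → ℝ =>
        ((P fun i => (fun a => (w ∘ σ) (Fin.castAdd m a)) (Fin.castAdd m i)).1
          ((Prod.fst ∘ S) fun j => (fun a => (w ∘ σ) (Fin.castAdd m a)) (Fin.natAdd n j))).1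
          ((Prod.snd ∘ S) fun j => (w ∘ σ) (Fin.natAdd (n + m) j))) =
        fun w : Fin (n + m) → ℝ =>
          ((P fun i => w (Fin.castAdd m i)).1
            (Prod.fst (S fun j => w (Fin.natAdd n j)))).1
            (Prod.snd (S fun j => w (Fin.natAdd n j))) := by
      funext w; simp only [hσ, Function.comp_apply, Fin.addCases_left, Fin.addCases_right]
    rw [heq] at h5
    exact h5
  · intro f
    exact Subtype.ext rfl
  · intro g
    refine Subtype.ext ?_
    funext x
    exact Subtype.ext rfl
end

section
/- The constant map X → * from any diffeological space to the point has the right lifting property with respect to every inclusion D^n → D^{n+1}; that is, every diffeological space is fibrant. -/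
open Set

variable {X Y Z : Type}

/-- `γ t = 0` for `t ≤ 0` and `exp (-1/t)` for `t > 0`. -/
noncomputable def gammaFn (t : ℝ) : ℝ := if t ≤ 0 then 0 else Real.exp (-1 / t)

/-- The smooth step function `λ t = γ t / (γ t + γ (1 - t))`. -/
noncomputable def smoothStep (t : ℝ) : ℝ := gammaFn t / (gammaFn t + gammaFn (1 - t))

/-- The smooth step `λ` viewed as a (surjective) map `ℝ → [0,1]`. -/
noncomputable def stepIcc (t : ℝ) : Icc (0 : ℝ) 1 :=
  Set.projIcc 0 1 zero_le_one (smoothStep t)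

/-- `0` as a point of `[0,1]`. -/
def I0 : Icc (0 : ℝ) 1 := ⟨0, by constructor <;> norm_num⟩

/-- `1` as a point of `[0,1]`. -/
def I1 : Icc (0 : ℝ) 1 := ⟨1, by constructor <;> norm_num⟩

/-- `F` is a smooth homotopy from `f₀` to `f₁`, with parameter space `Ĩ = [0,1]`
(whose diffeology enters through the given diffeology `dXT` on `X × Ĩ`). -/
def IsHomotopy {X Y : Type} (dXT : Diffeology' (X × Icc (0 : ℝ) 1)) (dY : Diffeology' Y)
    (f₀ f₁ : X → Y) (F : X × Icc (0 : ℝ) 1 → Y) : Prop :=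
  DSmooth dXT dY F ∧ (∀ x, F (x, I0) = f₀ x) ∧ ∀ x, F (x, I1) = f₁ x

/-- The gluing map `q_n : ℝ^{n+1} × ℝ → ℝ^{n+2}`,
`q_n (v, t) = (v₁, …, vₙ, v_{n+1} cos πt, v_{n+1} sin πt)` (ambient version). -/
noncomputable def qmap (n : ℕ) (v : EuclideanSpace ℝ (Fin (n + 1))) (t : ℝ) :
    EuclideanSpace ℝ (Fin (n + 2)) := WithLp.toLp 2 fun i =>
  if h : (i : ℕ) < n then v ⟨i, by omega⟩
  else if (i : ℕ) = n then v (Fin.last n) * Real.cos (Real.pi * t)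
  else v (Fin.last n) * Real.sin (Real.pi * t)

/-- The generating parameterization `Q_n ∘ λⁿ : ℝⁿ → D^n ⊆ ℝ^{n+1}` (ambient version),
defined inductively via `q`. -/
noncomputable def hemiMap : (n : ℕ) → (Fin n → ℝ) → EuclideanSpace ℝ (Fin (n + 1))
  | 0, _ => WithLp.toLp 2 fun _ => 1
  | n + 1, x => qmap n (hemiMap n (x ∘ Fin.castSucc)) (smoothStep (x (Fin.last n)))

/-- The upper hemisphere `D^n = {v ∈ ℝ^{n+1} : ‖v‖ = 1, v_{n+1} ≥ 0}`. -/
def upperHemi (n : ℕ) : Set (EuclideanSpace ℝ (Fin (n + 1))) :=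
  {v | ‖v‖ = 1 ∧ 0 ≤ v (Fin.last n)}

/-- The equator `S̃^{n-1} ⊆ D^n`, i.e. the points with vanishing last coordinate. -/
def equator (n : ℕ) : Set (upperHemi n) :=
  {v | (v : EuclideanSpace ℝ (Fin (n + 1))) (Fin.last n) = 0}

/-- The lower face `D⁻^{n-1} ⊆ S̃^{n-1} ⊆ D^n`: points of the equator whose `n`-th
coordinate is non-positive (meaningful for `n ≥ 1`). -/
def lowerFace (n : ℕ) : Set (upperHemi n) :=
  {v | (v : EuclideanSpace ℝ (Fin (n + 1))) (Fin.last n) = 0 ∧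
    (v : EuclideanSpace ℝ (Fin (n + 1))) ⟨n - 1, by omega⟩ ≤ 0}

/-- The data of the diffeological hemispheres: each `D^n` carries the quotient
diffeology along the generating parameterization `Q_n ∘ λⁿ : ℝⁿ → D^n`, together
with the map `Q_n : Ĩⁿ → D^n` and the upper/lower inclusions `D^n → D^{n+1}`. -/
structure HemiData : Type 1 where
  /-- the diffeology of `D^n` -/
  dD : ∀ n : ℕ, Diffeology' (upperHemi n)
  /-- the generating parameterization `Q_n ∘ λⁿ : ℝⁿ → D^n` -/
  Q : ∀ n : ℕ, (Fin n → ℝ) → upperHemi n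
  hQ : ∀ (n : ℕ) (x : Fin n → ℝ),
    (Q n x : EuclideanSpace ℝ (Fin (n + 1))) = hemiMap n x
  /-- `D^n` carries the quotient (pushforward) diffeology along `Q_n ∘ λⁿ` -/
  subd : ∀ n : ℕ, IsSubduction (stdDiffeology (Fin n → ℝ)) (dD n) (Q n)
  /-- the map `Q_n : Ĩⁿ → D^n` -/
  QI : ∀ n : ℕ, ((Fin n → Icc (0 : ℝ) 1) → upperHemi n)
  hQI : ∀ (n : ℕ) (x : Fin n → ℝ), QI n (fun i => stepIcc (x i)) = Q n x
  /-- the inclusion `D^n → D^{n+1}`, `v ↦ (v, 0)` -/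
  incl : ∀ n : ℕ, upperHemi n → upperHemi (n + 1)
  hincl : ∀ (n : ℕ) (v : upperHemi n),
    (∀ i : Fin (n + 1), (incl n v : EuclideanSpace ℝ (Fin (n + 2))) (Fin.castSucc i) =
      (v : EuclideanSpace ℝ (Fin (n + 1))) i) ∧
    (incl n v : EuclideanSpace ℝ (Fin (n + 2))) (Fin.last (n + 1)) = 0
  /-- the lower inclusion `D^n ≅ D⁻^n ⊆ D^{n+1}`, `v ↦ (v₁, …, vₙ, -v_{n+1}, 0)` -/
  incl' : ∀ n : ℕ, upperHemi n → upperHemi (n + 1)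
  hincl' : ∀ (n : ℕ) (v : upperHemi n),
    (∀ i : Fin (n + 1), (incl' n v : EuclideanSpace ℝ (Fin (n + 2))) (Fin.castSucc i) =
      (if i = Fin.last n then -(v : EuclideanSpace ℝ (Fin (n + 1))) i
        else (v : EuclideanSpace ℝ (Fin (n + 1))) i)) ∧
    (incl' n v : EuclideanSpace ℝ (Fin (n + 2))) (Fin.last (n + 1)) = 0

variable {X : Type}

/-- A smooth map of triples `(D^n, S̃^{n-1}, D⁻^{n-1}) → (X, A, x₀)`. -/
def TripleMap (hd : HemiData) (n : ℕ) (dX : Diffeology' X) (A : Set X) (x₀ : X)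
    (φ : upperHemi n → X) : Prop :=
  DSmooth (hd.dD n) dX φ ∧ MapsTo φ (equator n) A ∧ ∀ v ∈ lowerFace n, φ v = x₀

/-- Smooth homotopy of maps of triples `(D^n, S̃^{n-1}, D⁻^{n-1}) → (X, A, x₀)`. -/
def HomotopicTriples (hd : HemiData)
    (dDI : ∀ k : ℕ, Diffeology' (upperHemi k × Icc (0 : ℝ) 1))
    (n : ℕ) (dX : Diffeology' X) (A : Set X) (x₀ : X)
    (φ ψ : upperHemi n → X) : Prop :=
  ∃ H : upperHemi n × Icc (0 : ℝ) 1 → X,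
    DSmooth (dDI n) dX H ∧ (∀ v, H (v, I0) = φ v) ∧ (∀ v, H (v, I1) = ψ v) ∧
    ∀ t : Icc (0 : ℝ) 1, TripleMap hd n dX A x₀ fun v => H (v, t)

/-- The homotopy set `π_n(X, A, x₀) = [D^n, S̃^{n-1}, D⁻^{n-1}; X, A, x₀]`.
(For `A = {x₀}` this is the homotopy set `π_n(X, x₀)` of the pointed space.) -/
def piSet (hd : HemiData)
    (dDI : ∀ k : ℕ, Diffeology' (upperHemi k × Icc (0 : ℝ) 1))
    (n : ℕ) (dX : Diffeology' X) (A : Set X) (x₀ : X) : Type :=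
  Quot fun φ ψ : {f : upperHemi n → X // TripleMap hd n dX A x₀ f} =>
    HomotopicTriples hd dDI n dX A x₀ φ.1 ψ.1

/-- The homotopy class of a map of triples. -/
def piCls (hd : HemiData)
    (dDI : ∀ k : ℕ, Diffeology' (upperHemi k × Icc (0 : ℝ) 1))
    (n : ℕ) (dX : Diffeology' X) (A : Set X) (x₀ : X)
    (φ : {f : upperHemi n → X // TripleMap hd n dX A x₀ f}) :
    piSet hd dDI n dX A x₀ :=
  Quot.mk _ φ

/-- The class of the constant map at the basepoint. -/
def piBase (hd : HemiData)
    (dDI : ∀ k : ℕ, Diffeology' (upperHemi k × Icc (0 : ℝ) 1))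
    (n : ℕ) (dX : Diffeology' X) (A : Set X) (x₀ : X) (hx : x₀ ∈ A) :
    piSet hd dDI n dX A x₀ :=
  piCls hd dDI n dX A x₀ ⟨fun _ => x₀, DSmooth.const x₀, fun _ _ => hx, fun _ _ => rfl⟩

/-- `χ` is the concatenation `φ * ψ` in the first `Ĩ`-coordinate, reparameterized
by `λ(3t)` and `λ(3t-2)`. -/
noncomputable def IsConcat (hd : HemiData) (n : ℕ) (hn : 0 < n)
    (φ ψ χ : upperHemi n → X) : Prop :=
  ∀ t : Fin n → Icc (0 : ℝ) 1,
    χ (hd.QI n t) =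
      if (t ⟨0, hn⟩ : ℝ) ≤ 1 / 2 then
        φ (hd.QI n (Function.update t ⟨0, hn⟩ (stepIcc (3 * (t ⟨0, hn⟩ : ℝ)))))
      else
        ψ (hd.QI n (Function.update t ⟨0, hn⟩ (stepIcc (3 * (t ⟨0, hn⟩ : ℝ) - 2))))

/-- A diffeological Serre fibration: a smooth map with the right lifting property
with respect to every inclusion `D^n → D^{n+1}`. -/
def IsFibration (hd : HemiData) {E B : Type} (dE : Diffeology' E) (dB : Diffeology' B)
    (p : E → B) : Prop :=
  DSmooth dE dB p ∧
    ∀ (n : ℕ) (f : upperHemi n → E) (g : upperHemi (n + 1) → B),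
      DSmooth (hd.dD n) dE f → DSmooth (hd.dD (n + 1)) dB g →
      (∀ v, p (f v) = g (hd.incl n v)) →
      ∃ h : upperHemi (n + 1) → E, DSmooth (hd.dD (n + 1)) dE h ∧
        (∀ v, h (hd.incl n v) = f v) ∧ ∀ w, p (h w) = g w

section Retraction

lemma gammaFn_nonneg (t : ℝ) : 0 ≤ gammaFn t := by
  unfold gammaFn; split
  · exact le_refl 0
  · exact (Real.exp_pos _).le

lemma gammaFn_pos {t : ℝ} (ht : 0 < t) : 0 < gammaFn t := by
  unfold gammaFn; rw [if_neg (not_le.2 ht)]; exact Real.exp_pos _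

lemma smoothStep_mem (t : ℝ) : smoothStep t ∈ Icc (0 : ℝ) 1 := by
  have hden : 0 < gammaFn t + gammaFn (1 - t) := by
    rcases le_or_gt t 0 with h | h
    · have : 0 < gammaFn (1 - t) := gammaFn_pos (by linarith)
      have := gammaFn_nonneg t; linarith
    · have : 0 < gammaFn t := gammaFn_pos h
      have := gammaFn_nonneg (1 - t); linarith
  unfold smoothStep
  constructor
  · exact div_nonneg (gammaFn_nonneg t) hden.le
  · rw [div_le_one hden]
    have := gammaFn_nonneg (1 - t); linarith

lemma hemiMap_succ (n : ℕ) (x : Fin (n + 1) → ℝ) :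
    hemiMap (n + 1) x =
      qmap n (hemiMap n (x ∘ Fin.castSucc)) (smoothStep (x (Fin.last n))) := rfl

lemma qmap_lt (n : ℕ) (v : EuclideanSpace ℝ (Fin (n + 1))) (t : ℝ)
    (i : Fin (n + 2)) (h : (i : ℕ) < n) :
    qmap n v t i = v ⟨i, by omega⟩ := dif_pos h

lemma qmap_mid (n : ℕ) (v : EuclideanSpace ℝ (Fin (n + 1))) (t : ℝ) :
    qmap n v t ⟨n, by omega⟩ = v (Fin.last n) * Real.cos (Real.pi * t) := by
  unfold qmap
  rw [WithLp.ofLp_toLp]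
  rw [dif_neg (lt_irrefl n), if_pos rfl]

lemma qmap_last (n : ℕ) (v : EuclideanSpace ℝ (Fin (n + 1))) (t : ℝ) :
    qmap n v t (Fin.last (n + 1)) = v (Fin.last n) * Real.sin (Real.pi * t) := by
  unfold qmap
  have h1 : ¬ ((Fin.last (n + 1) : ℕ) < n) := by simp [Fin.last]
  have h2 : ¬ ((Fin.last (n + 1) : ℕ) = n) := by simp [Fin.last]
  rw [WithLp.ofLp_toLp]
  rw [dif_neg h1, if_neg h2]

lemma hemiMap_last_nonneg : ∀ (n : ℕ) (x : Fin n → ℝ),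
    0 ≤ hemiMap n x (Fin.last n)
  | 0, _ => by norm_num [hemiMap]
  | n + 1, x => by
    have hv := hemiMap_last_nonneg n (x ∘ Fin.castSucc)
    rw [hemiMap_succ, qmap_last]
    have hs := smoothStep_mem (x (Fin.last n))
    have hsin : 0 ≤ Real.sin (Real.pi * smoothStep (x (Fin.last n))) := by
      apply Real.sin_nonneg_of_nonneg_of_le_pi
      · exact mul_nonneg Real.pi_pos.le hs.1
      · calc Real.pi * smoothStep (x (Fin.last n)) ≤ Real.pi * 1 :=
              mul_le_mul_of_nonneg_left hs.2 Real.pi_pos.le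
          _ = Real.pi := mul_one _
    exact mul_nonneg hv hsin

/-- Ambient retraction `ℝ^{n+2} → ℝ^{n+1}`,
`(w₁, …, wₙ, a, b) ↦ (w₁, …, wₙ, √(a² + b²))`. -/
noncomputable def retrAux (n : ℕ) (w : EuclideanSpace ℝ (Fin (n + 2))) :
    EuclideanSpace ℝ (Fin (n + 1)) := WithLp.toLp 2 fun i =>
  if _ : (i : ℕ) < n then w ⟨i, by omega⟩
  else Real.sqrt ((w ⟨n, by omega⟩) ^ 2 + (w (Fin.last (n + 1))) ^ 2)

lemma retrAux_lt (n : ℕ) (w : EuclideanSpace ℝ (Fin (n + 2))) (i : Fin (n + 1))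
    (h : (i : ℕ) < n) : retrAux n w i = w ⟨i, by omega⟩ := dif_pos h

lemma retrAux_last (n : ℕ) (w : EuclideanSpace ℝ (Fin (n + 2))) :
    retrAux n w (Fin.last n) =
      Real.sqrt ((w ⟨n, by omega⟩) ^ 2 + (w (Fin.last (n + 1))) ^ 2) :=
  dif_neg (by simp)

lemma retrAux_sum (n : ℕ) (w : EuclideanSpace ℝ (Fin (n + 2))) :
    ∑ i : Fin (n + 1), ‖retrAux n w i‖ ^ 2 = ∑ i : Fin (n + 2), ‖w i‖ ^ 2 := by
  rw [Fin.sum_univ_castSucc (f := fun i : Fin (n + 1) => ‖retrAux n w i‖ ^ 2),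
      Fin.sum_univ_castSucc (f := fun i : Fin (n + 2) => ‖w i‖ ^ 2),
      Fin.sum_univ_castSucc (f := fun i : Fin (n + 1) => ‖w i.castSucc‖ ^ 2)]
  have hsum : ∑ i : Fin n, ‖retrAux n w i.castSucc‖ ^ 2 =
      ∑ i : Fin n, ‖w i.castSucc.castSucc‖ ^ 2 := by
    apply Finset.sum_congr rfl
    intro i _
    have hi : ((i.castSucc : Fin (n + 1)) : ℕ) < n := i.isLt
    rw [retrAux_lt n w i.castSucc hi]
    congr 2
  rw [hsum, retrAux_last]
  have hnn : (0 : ℝ) ≤ (w ⟨n, by omega⟩) ^ 2 + (w (Fin.last (n + 1))) ^ 2 :=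
    add_nonneg (sq_nonneg _) (sq_nonneg _)
  have hx : ‖Real.sqrt ((w ⟨n, by omega⟩) ^ 2 + (w (Fin.last (n + 1))) ^ 2)‖ ^ 2 =
      ‖w ⟨n, by omega⟩‖ ^ 2 + ‖w (Fin.last (n + 1))‖ ^ 2 := by
    rw [Real.norm_eq_abs, sq_abs, Real.sq_sqrt hnn, Real.norm_eq_abs, Real.norm_eq_abs,
      sq_abs, sq_abs]
  rw [hx]
  have he : ((Fin.last n).castSucc : Fin (n + 2)) = ⟨n, by omega⟩ := by
    ext; simp
  rw [he]
  ring

/-- The smooth retraction `D^{n+1} → D^n`. -/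
noncomputable def retr (n : ℕ) (w : upperHemi (n + 1)) : upperHemi n :=
  ⟨retrAux n (w : EuclideanSpace ℝ (Fin (n + 2))), by
    constructor
    · rw [EuclideanSpace.norm_eq, retrAux_sum]
      have h1 := w.2.1
      rw [EuclideanSpace.norm_eq] at h1
      exact h1
    · rw [retrAux_last]
      exact Real.sqrt_nonneg _⟩

lemma retr_incl (hd : HemiData) (n : ℕ) (v : upperHemi n) :
    retr n (hd.incl n v) = v := by
  obtain ⟨h1, h2⟩ := hd.hincl n v
  apply Subtype.ext
  show retrAux n _ = _
  ext i
  rcases lt_or_ge ((i : ℕ)) n with hi | hi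
  · rw [retrAux_lt n _ i hi]
    have e : (⟨(i : ℕ), by omega⟩ : Fin (n + 2)) = Fin.castSucc i := by
      ext; simp
    rw [e, h1 i]
  · have hi' : i = Fin.last n := by
      ext; simp only [Fin.last]; omega
    subst hi'
    rw [retrAux_last]
    have e : (⟨n, by omega⟩ : Fin (n + 2)) = Fin.castSucc (Fin.last n) := by
      ext; simp
    rw [e, h1 (Fin.last n), h2]
    have hnn := v.2.2
    have : ((v : EuclideanSpace ℝ (Fin (n + 1))) (Fin.last n)) ^ 2 + (0 : ℝ) ^ 2 =
        ((v : EuclideanSpace ℝ (Fin (n + 1))) (Fin.last n)) ^ 2 := by ring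
    rw [this, Real.sqrt_sq hnn]

lemma retr_Q (hd : HemiData) (n : ℕ) (x : Fin (n + 1) → ℝ) :
    retr n (hd.Q (n + 1) x) = hd.Q n (x ∘ Fin.castSucc) := by
  apply Subtype.ext
  show retrAux n _ = _
  rw [hd.hQ (n + 1) x, hd.hQ n (x ∘ Fin.castSucc), hemiMap_succ]
  ext i
  rcases lt_or_ge ((i : ℕ)) n with hi | hi
  · rw [retrAux_lt n _ i hi, qmap_lt n _ _ _ (by simpa using hi)]
  · have hi' : i = Fin.last n := by
      ext; simp only [Fin.last]; omega
    subst hi'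
    rw [retrAux_last, qmap_mid, qmap_last]
    have key : (hemiMap n (x ∘ Fin.castSucc) (Fin.last n) *
          Real.cos (Real.pi * smoothStep (x (Fin.last n)))) ^ 2 +
        (hemiMap n (x ∘ Fin.castSucc) (Fin.last n) *
          Real.sin (Real.pi * smoothStep (x (Fin.last n)))) ^ 2 =
        (hemiMap n (x ∘ Fin.castSucc) (Fin.last n)) ^ 2 := by
      nlinarith [Real.sin_sq_add_cos_sq (Real.pi * smoothStep (x (Fin.last n)))]
    rw [key, Real.sqrt_sq (hemiMap_last_nonneg n (x ∘ Fin.castSucc))]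

lemma dsmooth_retr (hd : HemiData) (n : ℕ) :
    DSmooth (hd.dD (n + 1)) (hd.dD n) (retr n) := by
  intro k U P hU hP
  apply (hd.dD n).isPlot_locality U _ hU
  intro u hu
  obtain ⟨W, hWo, huW, hWU, S, hS, hSP⟩ := (hd.subd (n + 1)).2.2 U P hU hP u hu
  refine ⟨W, hWo, huW, hWU, ?_⟩
  classical
  set T : (Fin k → ℝ) → (Fin n → ℝ) := fun w =>
    if w ∈ W then (S w) ∘ Fin.castSucc
    else Classical.choose ((hd.subd n).1 (retr n (P w))) with hT
  have hQT : (retr n ∘ P) = hd.Q n ∘ T := by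
    funext w
    by_cases hw : w ∈ W
    · show retr n (P w) = hd.Q n (T w)
      rw [hT]
      simp only [if_pos hw]
      rw [← hSP w hw, retr_Q]
    · show retr n (P w) = hd.Q n (T w)
      rw [hT]
      simp only [if_neg hw]
      exact (Classical.choose_spec ((hd.subd n).1 (retr n (P w)))).symm
  rw [hQT]
  apply (hd.subd n).2.1 W T hWo
  show IsOpen W → ContDiffOn ℝ (⊤ : ℕ∞) T W
  intro _
  have hSsm : ContDiffOn ℝ (⊤ : ℕ∞) S W := hS hWo
  have hL : ContDiff ℝ (⊤ : ℕ∞) (fun v : Fin (n + 1) → ℝ => v ∘ Fin.castSucc) :=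
    contDiff_pi.2 fun i => contDiff_pi.1 contDiff_id _
  have hcomp : ContDiffOn ℝ (⊤ : ℕ∞) (fun w => (S w) ∘ Fin.castSucc) W :=
    hL.comp_contDiffOn hSsm
  apply hcomp.congr
  intro w hw
  rw [hT]
  simp only [if_pos hw]

end Retraction

/-- every diffeological space is fibrant: the map to the one-point
space has the right lifting property with respect to every inclusion
`D^n → D^{n+1}`; equivalently, every smooth map `D^n → X` extends smoothly to
`D^{n+1}`. -/
theorem every_diffeological_space_is_fibrant
    (hd : HemiData) {X : Type} (dX : Diffeology' X)
    (dPt : Diffeology' PUnit) :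
    IsFibration hd dX dPt (fun _ => PUnit.unit) ∧
    ∀ (n : ℕ) (f : upperHemi n → X), DSmooth (hd.dD n) dX f →
      ∃ h : upperHemi (n + 1) → X, DSmooth (hd.dD (n + 1)) dX h ∧
        ∀ v, h (hd.incl n v) = f v := by
  have key : ∀ (n : ℕ) (f : upperHemi n → X), DSmooth (hd.dD n) dX f →
      ∃ h : upperHemi (n + 1) → X, DSmooth (hd.dD (n + 1)) dX h ∧
        ∀ v, h (hd.incl n v) = f v := by
    intro n f hf
    refine ⟨f ∘ retr n, hf.comp (dsmooth_retr hd n), fun v => ?_⟩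
    show f (retr n (hd.incl n v)) = f v
    rw [retr_incl hd n v]
  refine ⟨⟨DSmooth.const PUnit.unit, ?_⟩, key⟩
  intro n f g hf hg hfg
  obtain ⟨h, hsm, hcomm⟩ := key n f hf
  exact ⟨h, hsm, hcomm, fun w => Subsingleton.elim _ _⟩
end
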